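/- arXiv:2005.11733 — 3 statements merged into one kernel-verified Lean document; each statement's English description precedes it below -/
import Mathlib

section
/- Let M(λ) = ∏_{k=1}^n (a_k − λ)/(b_k − λ) where a₁,…,aₙ,b₁,…,bₙ are complex numbers, all distinct, and suppose Im M(λ) ≥ 0 for all λ with Im λ > 0 and M(conj λ) = conj M(λ) for all λ where M is defined. Then all a_k and all b_k are real. -/
open Complex

private lemma coreZero (g : ℂ → ℂ) (p : ℂ) (hg : ContinuousAt g p) (hgp : g p ≠ 0)
    {δ : ℝ} (hδ : 0 < δ) {S : Set ℂ} (hS : S.Finite) :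
    ∃ lam : ℂ, lam ∉ S ∧ lam ≠ p ∧ dist lam p < δ ∧ ((p - lam) * g lam).im < 0 := by
  set c := g p with hc
  set u : ℂ := Complex.I * (starRingEnd ℂ) c with hu
  have hu0 : u ≠ 0 := mul_ne_zero Complex.I_ne_zero (by simpa using hgp)
  have hpos : 0 < (u * g p).im := by
    have h1 : (u * g p).im = Complex.normSq c := by
      simp [hu, ← hc, Complex.mul_im, Complex.mul_re, Complex.normSq_apply]
      ring
    rw [h1]
    exact Complex.normSq_pos.mpr hgp
  have hcont : ContinuousAt (fun z => (u * g z).im) p :=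
    Complex.continuous_im.continuousAt.comp (continuousAt_const.mul hg)
  have hev : ∀ᶠ z in nhds p, 0 < (u * g z).im :=
    hcont.eventually (eventually_gt_nhds hpos)
  obtain ⟨r, hr0, hball⟩ := Metric.eventually_nhds_iff.mp hev
  have hnu : 0 < ‖u‖ := norm_pos_iff.mpr hu0
  set ε : ℝ := min r δ / ‖u‖ with hε
  have hε0 : 0 < ε := div_pos (lt_min hr0 hδ) hnu
  have hinj : Function.Injective (fun t : ℝ => p + (t : ℂ) * u) := by
    intro s t h
    simp only [add_right_inj] at h
    have h2 : (s : ℂ) = t := mul_right_cancel₀ hu0 h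
    exact_mod_cast h2
  have hB : {t : ℝ | p + (t : ℂ) * u ∈ S}.Finite := hS.preimage hinj.injOn
  obtain ⟨t, ⟨⟨ht0, htε⟩, htB⟩⟩ := ((Set.Ioo_infinite hε0).diff hB).nonempty
  have hdist : dist (p + (t : ℂ) * u) p = t * ‖u‖ := by
    rw [dist_eq_norm, add_sub_cancel_left, norm_mul, Complex.norm_real,
      Real.norm_eq_abs, abs_of_pos ht0]
  have hlt : t * ‖u‖ < min r δ := by
    have := mul_lt_mul_of_pos_right htε hnu
    rwa [hε, div_mul_cancel₀ _ hnu.ne'] at this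
  refine ⟨p + (t : ℂ) * u, htB, ?_, ?_, ?_⟩
  · intro h
    have : (t : ℂ) * u = 0 := by
      have := h
      rwa [add_eq_left] at this
    rcases mul_eq_zero.mp this with h' | h'
    · exact ht0.ne' (by exact_mod_cast h')
    · exact hu0 h'
  · rw [hdist]; exact hlt.trans_le (min_le_right _ _)
  · have hdr : dist (p + (t : ℂ) * u) p < r := by
      rw [hdist]; exact hlt.trans_le (min_le_left _ _)
    have him : 0 < (u * g (p + (t : ℂ) * u)).im := hball hdr
    have heq : (p - (p + (t : ℂ) * u)) * g (p + (t : ℂ) * u)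
        = -((t : ℂ) * (u * g (p + (t : ℂ) * u))) := by ring
    have him2 : (-((t : ℂ) * (u * g (p + (t : ℂ) * u)))).im
        = -(t * (u * g (p + (t : ℂ) * u)).im) := by
      simp [Complex.mul_im]
    rw [heq, him2]
    have : 0 < t * (u * g (p + (t : ℂ) * u)).im := mul_pos ht0 him
    linarith

private lemma corePole (g : ℂ → ℂ) (p : ℂ) (hg : ContinuousAt g p) (hgp : g p ≠ 0)
    {δ : ℝ} (hδ : 0 < δ) {S : Set ℂ} (hS : S.Finite) :
    ∃ lam : ℂ, lam ∉ S ∧ lam ≠ p ∧ dist lam p < δ ∧ (g lam / (p - lam)).im < 0 := by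
  have hg' : ContinuousAt (fun z => -((starRingEnd ℂ) (g z))) p :=
    (Complex.continuous_conj.continuousAt.comp hg).neg
  have hgp' : -((starRingEnd ℂ) (g p)) ≠ 0 := by simpa using hgp
  obtain ⟨lam, hlS, hlp, hld, him⟩ := coreZero _ p hg' hgp' hδ hS
  refine ⟨lam, hlS, hlp, hld, ?_⟩
  have hw : p - lam ≠ 0 := sub_ne_zero.mpr (Ne.symm hlp)
  have hns : 0 < Complex.normSq (p - lam) := Complex.normSq_pos.mpr hw
  rw [Complex.div_im]
  have hkey : (g lam).im * (p - lam).re - (g lam).re * (p - lam).im < 0 := by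
    simp only [Complex.mul_im, Complex.neg_re, Complex.neg_im,
      Complex.conj_re, Complex.conj_im] at him
    nlinarith [him]
  rw [div_sub_div_same]
  exact div_neg_of_neg_of_pos hkey hns

private lemma auxMain (n : ℕ) (a b : Fin n → ℂ)
    (haa : ∀ k l : Fin n, k ≠ l → a k ≠ a l)
    (hbb : ∀ k l : Fin n, k ≠ l → b k ≠ b l)
    (hab : ∀ k l : Fin n, a k ≠ b l)
    (M : ℂ → ℂ) (S : Set ℂ) (hS : S.Finite)
    (hform : ∀ lam : ℂ, lam ∉ S → M lam = ∏ k, (a k - lam) / (b k - lam))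
    (hherg : ∀ lam : ℂ, 0 < lam.im → 0 ≤ (M lam).im)
    (j : Fin n) : (a j).im ≤ 0 ∧ (b j).im ≤ 0 := by
  have imlam : ∀ (p lam : ℂ), dist lam p < p.im → 0 < lam.im := by
    intro p lam hd
    rw [Complex.dist_eq] at hd
    have h1 := Complex.abs_im_le_norm (lam - p)
    have h2 : (lam - p).im = lam.im - p.im := by simp
    rw [h2] at h1
    have h3 := abs_lt.mp (h1.trans_lt hd)
    linarith [h3.1]
  constructor
  · by_contra h
    push_neg at h
    set p := a j with hp
    set g : ℂ → ℂ := fun z => (∏ k ∈ Finset.univ.erase j, (a k - z) / (b k - z)) / (b j - z)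
      with hgdef
    have hg : ContinuousAt g p := by
      have h1 : ContinuousAt (fun z => ∏ k ∈ Finset.univ.erase j, (a k - z) / (b k - z)) p := by
        apply tendsto_finset_prod
        intro k _
        exact (continuousAt_const.sub continuousAt_id).div
          (continuousAt_const.sub continuousAt_id) (sub_ne_zero.mpr (hab j k).symm)
      exact h1.div (continuousAt_const.sub continuousAt_id) (sub_ne_zero.mpr (hab j j).symm)
    have hgp : g p ≠ 0 := by
      apply div_ne_zero _ (sub_ne_zero.mpr (hab j j).symm)
      rw [Finset.prod_ne_zero_iff]
      intro k hk
      exact div_ne_zero (sub_ne_zero.mpr (haa k j (Finset.ne_of_mem_erase hk)))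
        (sub_ne_zero.mpr (hab j k).symm)
    obtain ⟨lam, hlS, hlp, hld, him⟩ := coreZero g p hg hgp h hS
    have hlam : 0 < lam.im := imlam p lam hld
    have hMeq : M lam = (p - lam) * g lam := by
      rw [hform lam hlS, ← Finset.mul_prod_erase _ _ (Finset.mem_univ j),
        div_mul_eq_mul_div, mul_div_assoc]
    have := hherg lam hlam
    rw [hMeq] at this
    linarith
  · by_contra h
    push_neg at h
    set p := b j with hp
    set g : ℂ → ℂ := fun z => (a j - z) * ∏ k ∈ Finset.univ.erase j, (a k - z) / (b k - z)
      with hgdef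
    have hg : ContinuousAt g p := by
      apply (continuousAt_const.sub continuousAt_id).mul
      apply tendsto_finset_prod
      intro k hk
      exact (continuousAt_const.sub continuousAt_id).div
        (continuousAt_const.sub continuousAt_id)
        (sub_ne_zero.mpr (hbb k j (Finset.ne_of_mem_erase hk)))
    have hgp : g p ≠ 0 := by
      apply mul_ne_zero (sub_ne_zero.mpr (hab j j))
      rw [Finset.prod_ne_zero_iff]
      intro k hk
      exact div_ne_zero (sub_ne_zero.mpr (hab k j))
        (sub_ne_zero.mpr (hbb k j (Finset.ne_of_mem_erase hk)))
    obtain ⟨lam, hlS, hlp, hld, him⟩ := corePole g p hg hgp h hS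
    have hlam : 0 < lam.im := imlam p lam hld
    have hMeq : M lam = g lam / (p - lam) := by
      rw [hform lam hlS, ← Finset.mul_prod_erase _ _ (Finset.mem_univ j),
        div_mul_eq_mul_div]
    have := hherg lam hlam
    rw [hMeq] at this
    linarith

theorem stmt_4 (n : ℕ) (a b : Fin n → ℂ)
    (hdist : Function.Injective (Sum.elim a b : Fin n ⊕ Fin n → ℂ))
    (M : ℂ → ℂ) (hM : ∀ lam : ℂ, M lam = ∏ k, (a k - lam) / (b k - lam))
    (hherg : ∀ lam : ℂ, 0 < lam.im → 0 ≤ (M lam).im)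
    (hsym : ∀ lam : ℂ, (∀ k, lam ≠ b k) → (∀ k, (starRingEnd ℂ) lam ≠ b k) →
      M ((starRingEnd ℂ) lam) = (starRingEnd ℂ) (M lam)) :
    (∀ k, (a k).im = 0) ∧ (∀ k, (b k).im = 0) := by
  have haa : ∀ k l : Fin n, k ≠ l → a k ≠ a l := by
    intro k l hkl he
    exact hkl (Sum.inl_injective (@hdist (Sum.inl k) (Sum.inl l) he))
  have hbb : ∀ k l : Fin n, k ≠ l → b k ≠ b l := by
    intro k l hkl he
    exact hkl (Sum.inr_injective (@hdist (Sum.inr k) (Sum.inr l) he))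
  have hab : ∀ k l : Fin n, a k ≠ b l := by
    intro k l he
    exact Sum.inl_ne_inr (@hdist (Sum.inl k) (Sum.inr l) he)
  -- first application: with (a, b) and S = ∅
  have H1 : ∀ j, (a j).im ≤ 0 ∧ (b j).im ≤ 0 :=
    auxMain n a b haa hbb hab M ∅ Set.finite_empty (fun lam _ => hM lam) hherg
  -- second application: with conjugated data
  have hcinj : Function.Injective (starRingEnd ℂ) := fun x y h => by
    have := congrArg (starRingEnd ℂ) h
    simpa using this
  set a' : Fin n → ℂ := fun k => (starRingEnd ℂ) (a k) with ha'
  set b' : Fin n → ℂ := fun k => (starRingEnd ℂ) (b k) with hb'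
  have haa' : ∀ k l : Fin n, k ≠ l → a' k ≠ a' l := fun k l hkl he =>
    haa k l hkl (hcinj he)
  have hbb' : ∀ k l : Fin n, k ≠ l → b' k ≠ b' l := fun k l hkl he =>
    hbb k l hkl (hcinj he)
  have hab' : ∀ k l : Fin n, a' k ≠ b' l := fun k l he =>
    hab k l (hcinj he)
  set S : Set ℂ := Set.range b ∪ Set.range b' with hSdef
  have hS : S.Finite := (Set.finite_range b).union (Set.finite_range b')
  have hform : ∀ lam : ℂ, lam ∉ S → M lam = ∏ k, (a' k - lam) / (b' k - lam) := by
    intro lam hlam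
    rw [hSdef, Set.mem_union] at hlam
    push_neg at hlam
    have h1 : ∀ k, (starRingEnd ℂ) lam ≠ b k := by
      intro k he
      exact hlam.2 ⟨k, by rw [hb']; simp [← he]⟩
    have h2 : ∀ k, lam ≠ b k := by
      intro k he
      exact hlam.1 ⟨k, he.symm⟩
    have h3 := hsym ((starRingEnd ℂ) lam) h1 (by simpa using h2)
    rw [Complex.conj_conj] at h3
    rw [h3, hM ((starRingEnd ℂ) lam), map_prod]
    apply Finset.prod_congr rfl
    intro k _
    rw [map_div₀, map_sub, map_sub, Complex.conj_conj, ha', hb']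
  have H2 : ∀ j, (a' j).im ≤ 0 ∧ (b' j).im ≤ 0 :=
    auxMain n a' b' haa' hbb' hab' M S hS hform hherg
  constructor
  · intro k
    have h1 := (H1 k).1
    have h2 := (H2 k).1
    rw [ha'] at h2
    simp only [Complex.conj_im] at h2
    linarith
  · intro k
    have h1 := (H1 k).2
    have h2 := (H2 k).2
    rw [hb'] at h2
    simp only [Complex.conj_im] at h2
    linarith
end

section
/- Let a and ω be real numbers and let w₀, w₁ ∈ L²(0,1). Define w on (a−1, a+1) by w(t) = (w₀(a−t) − w₁(a−t))/2 for t ∈ (a−1, a) and w(t) = (w₀(t−a) + w₁(t−a))/2 for t ∈ (a, a+1). Then for every nonzero complex ρ with cos(ρa) and sin(ρa) defined as entire functions, the identity (sin ρ/ρ − ω cos ρ/(2ρ²) + ρ⁻²∫₀¹ w₀(t) cos(ρt) dt)·cos(ρa) − (cos ρ + ω sin ρ/(2ρ) + ρ⁻¹∫₀¹ w₁(t) sin(ρt) dt)·sin(ρa)/ρ = sin(ρ(1−a))/ρ − ω cos(ρ(1−a))/(2ρ²) + ρ⁻²∫_{a−1}^{a+1} w(t) cos(ρt) dt holds. -/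
/-!
Substituting `t = a - s` on `(a - 1, a)` and `t = a + s` on `(a, a + 1)` folds the integral of
`w t * cos (ρ t)` over `(a - 1, a + 1)` into an integral over `(0, 1)`, where the addition
formulas for `cos (ρ (a ∓ s))` turn the kernel into `w₀ s cos(ρa) cos(ρs) - w₁ s sin(ρa) sin(ρs)`.
What remains is the expansion of `sin (ρ (1 - a))` and `cos (ρ (1 - a))`.
-/

open Real MeasureTheory intervalIntegral Set

theorem MeasureTheory.MemLp.intervalIntegrable {E : Type*} [NormedAddCommGroup E] {f : ℝ → E}
    {p : ENNReal} {a b : ℝ} (hp : 1 ≤ p) (hab : a ≤ b)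
    (hf : MemLp f p (volume.restrict (Ioc a b))) : IntervalIntegrable f volume a b :=
  (intervalIntegrable_iff_integrableOn_Ioc_of_le hab).2 (hf.integrable hp)

theorem intervalIntegral.integral_sub_add_eq_integral_comp_sub_add_comp_add {E : Type*}
    [NormedAddCommGroup E] [NormedSpace ℝ E] {f : ℝ → E} {a c : ℝ}
    (hL : IntervalIntegrable (fun s => f (a - s)) volume 0 c)
    (hR : IntervalIntegrable (fun s => f (a + s)) volume 0 c) :
    ∫ t in (a - c)..(a + c), f t = ∫ s in 0..c, (f (a - s) + f (a + s)) := by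
  have hL' : IntervalIntegrable f volume (a - c) a := by simpa using (hL.comp_sub_left a).symm
  have hR' : IntervalIntegrable f volume a (a + c) := by simpa [add_comm] using hR.comp_sub_right a
  rw [← integral_add_adjacent_intervals hL' hR', integral_add hL hR, integral_comp_sub_left,
    integral_comp_add_left]
  simp

theorem integral_glued_mul_cos {w₀ w₁ w : ℝ → ℂ} {a : ℝ} (ρ : ℂ)
    (h₀ : IntervalIntegrable w₀ volume 0 1) (h₁ : IntervalIntegrable w₁ volume 0 1)
    (hwL : ∀ t ∈ Ioo (a - 1) a, w t = (w₀ (a - t) - w₁ (a - t)) / 2)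
    (hwR : ∀ t ∈ Ioo a (a + 1), w t = (w₀ (t - a) + w₁ (t - a)) / 2) :
    ∫ t in (a - 1)..(a + 1), w t * Complex.cos (ρ * t)
      = Complex.cos (ρ * a) * (∫ t in (0:ℝ)..1, w₀ t * Complex.cos (ρ * t))
        - Complex.sin (ρ * a) * ∫ t in (0:ℝ)..1, w₁ t * Complex.sin (ρ * t) := by
  set L : ℝ → ℂ := fun s => (w₀ s - w₁ s) / 2 * Complex.cos (ρ * ↑(a - s))
  set R : ℝ → ℂ := fun s => (w₀ s + w₁ s) / 2 * Complex.cos (ρ * ↑(a + s))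
  have hL : EqOn (fun s : ℝ => w (a - s) * Complex.cos (ρ * ↑(a - s))) L (Ioo 0 1) :=
    fun s hs => by
      dsimp only
      rw [hwL (a - s) ⟨by linarith [hs.2], by linarith [hs.1]⟩, sub_sub_cancel]
  have hR : EqOn (fun s : ℝ => w (a + s) * Complex.cos (ρ * ↑(a + s))) R (Ioo 0 1) :=
    fun s hs => by
      dsimp only
      rw [hwR (a + s) ⟨by linarith [hs.1], by linarith [hs.2]⟩, add_sub_cancel_left]
  have hLi : IntervalIntegrable L volume 0 1 :=
    ((h₀.sub h₁).div_const 2).mul_continuousOn (by fun_prop)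
  have hRi : IntervalIntegrable R volume 0 1 :=
    ((h₀.add h₁).div_const 2).mul_continuousOn (by fun_prop)
  have hsum : EqOn (fun s : ℝ => w (a - s) * Complex.cos (ρ * ↑(a - s))
        + w (a + s) * Complex.cos (ρ * ↑(a + s)))
      (fun s => Complex.cos (ρ * a) * (w₀ s * Complex.cos (ρ * s))
        - Complex.sin (ρ * a) * (w₁ s * Complex.sin (ρ * s))) (Ioo 0 1) := fun s hs => by
    simp only [hL hs, hR hs, L, R]
    push_cast
    rw [mul_sub, mul_add, Complex.cos_sub, Complex.cos_add]
    ring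
  have h01 : uIoo (0:ℝ) 1 = Ioo 0 1 := uIoo_of_le zero_le_one
  rw [integral_sub_add_eq_integral_comp_sub_add_comp_add
      (hLi.congr_uIoo (h01 ▸ hL.symm))
      (hRi.congr_uIoo (h01 ▸ hR.symm)),
    integral_congr_Ioo_of_le zero_le_one hsum,
    integral_sub ((h₀.mul_continuousOn (by fun_prop)).const_mul _)
      ((h₁.mul_continuousOn (by fun_prop)).const_mul _),
    intervalIntegral.integral_const_mul, intervalIntegral.integral_const_mul]

theorem stmt_5_general (a ω : ℝ) (w₀ w₁ w : ℝ → ℂ)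
    (hw₀ : MeasureTheory.MemLp w₀ 2 (volume.restrict (Set.Ioc (0:ℝ) 1)))
    (hw₁ : MeasureTheory.MemLp w₁ 2 (volume.restrict (Set.Ioc (0:ℝ) 1)))
    (hwL : ∀ t ∈ Set.Ioo (a - 1) a, w t = (w₀ (a - t) - w₁ (a - t)) / 2)
    (hwR : ∀ t ∈ Set.Ioo a (a + 1), w t = (w₀ (t - a) + w₁ (t - a)) / 2)
    (ρ : ℂ) :
    (Complex.sin ρ / ρ - (ω : ℂ) * Complex.cos ρ / (2 * ρ ^ 2)
        + ρ⁻¹ ^ 2 * ∫ t in (0:ℝ)..1, w₀ t * Complex.cos (ρ * t)) * Complex.cos (ρ * a)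
      - (Complex.cos ρ + (ω : ℂ) * Complex.sin ρ / (2 * ρ)
        + ρ⁻¹ * ∫ t in (0:ℝ)..1, w₁ t * Complex.sin (ρ * t)) * Complex.sin (ρ * a) / ρ
    = Complex.sin (ρ * (1 - (a : ℂ))) / ρ
      - (ω : ℂ) * Complex.cos (ρ * (1 - (a : ℂ))) / (2 * ρ ^ 2)
      + ρ⁻¹ ^ 2 * ∫ t in (a - 1)..(a + 1), w t * Complex.cos (ρ * t) := by
  rw [integral_glued_mul_cos ρ (hw₀.intervalIntegrable one_le_two zero_le_one)
      (hw₁.intervalIntegrable one_le_two zero_le_one) hwL hwR,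
    mul_one_sub, Complex.sin_sub, Complex.cos_sub]
  ring

theorem stmt_5 (a ω : ℝ) (w₀ w₁ w : ℝ → ℂ)
    (hw₀ : MeasureTheory.MemLp w₀ 2 (volume.restrict (Set.Ioc (0:ℝ) 1)))
    (hw₁ : MeasureTheory.MemLp w₁ 2 (volume.restrict (Set.Ioc (0:ℝ) 1)))
    (hwL : ∀ t ∈ Set.Ioo (a - 1) a, w t = (w₀ (a - t) - w₁ (a - t)) / 2)
    (hwR : ∀ t ∈ Set.Ioo a (a + 1), w t = (w₀ (t - a) + w₁ (t - a)) / 2)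
    (ρ : ℂ) (hρ : ρ ≠ 0) :
    (Complex.sin ρ / ρ - (ω : ℂ) * Complex.cos ρ / (2 * ρ ^ 2)
        + ρ⁻¹ ^ 2 * ∫ t in (0:ℝ)..1, w₀ t * Complex.cos (ρ * t)) * Complex.cos (ρ * a)
      - (Complex.cos ρ + (ω : ℂ) * Complex.sin ρ / (2 * ρ)
        + ρ⁻¹ * ∫ t in (0:ℝ)..1, w₁ t * Complex.sin (ρ * t)) * Complex.sin (ρ * a) / ρ
    = Complex.sin (ρ * (1 - (a : ℂ))) / ρ
      - (ω : ℂ) * Complex.cos (ρ * (1 - (a : ℂ))) / (2 * ρ ^ 2)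
      + ρ⁻¹ ^ 2 * ∫ t in (a - 1)..(a + 1), w t * Complex.cos (ρ * t) :=
  stmt_5_general a ω w₀ w₁ w hw₀ hw₁ hwL hwR ρ
end

section
/- Let K and K̃ be continuous functions on [0,1]×[−1,1] that are odd in the second variable (K(x,−t) = −K(x,t)) and vanish for |t| > x, and let S(x,λ) = sin(ρx)/ρ + ∫₀ˣ K(x,t) sin(ρt)/ρ dt and S̃(x,λ) = sin(ρx)/ρ + ∫₀ˣ K̃(x,t) sin(ρt)/ρ dt with λ = ρ². Define Q(x,t) = 2(K(x,2t−x) + K̃(x,2t−x) + ∫_{2t−x}^{x} K(x,τ)K̃(x,2t−τ) dτ) for 0 ≤ t ≤ x ≤ 1. Then for all x ∈ [0,1] and all complex ρ ≠ 0: 1 − 2λ·S(x,λ)·S̃(x,λ) = cos(2ρx) + ∫₀ˣ Q(x,t) cos(2ρt) dt. -/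
/-!
For fixed `x` the kernels `f = K x ·`, `g = K̃ x ·` are continuous, odd and supported in
`[-x, x]`, so `∫₀ˣ f(t) sin ρt dt` is half the integral over `ℝ`. Writing
`2 sin ρa sin ρt = cos ρ(a - t) - cos ρ(a + t)` and reflecting `t ↦ -t` in the first term
gives `sin ρa · ∫ f(t) sin ρt dt = -∫ f(t) cos ρ(a + t) dt`, and the substitution
`t = 2u - a` turns this into a cosine transform. With `a = x` this handles the cross terms of
`(sin ρx + ∫ f sin)(sin ρx + ∫ g sin)`; with `a = t` under the integral sign, followed by
Fubini, it turns the product of the two sine transforms into the cosine transform of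
`u ↦ (f ⋆ g)(2u)`, an even function which on `[0, x]` is the integral appearing in `Q`.
The remaining term is `1 - 2 sin² ρx = cos 2ρx`.
-/

open MeasureTheory Set ContinuousLinearMap

open scoped Convolution

section KernelSection

variable {K : ℝ → ℝ → ℂ}

-- At the corners `|t| = x = 1` the support condition says nothing; continuity in `x` does.
lemma kernel_one_eq_zero
    (hK : ContinuousOn (fun p : ℝ × ℝ => K p.1 p.2) (Icc 0 1 ×ˢ Icc (-1) 1))
    (hKsupp : ∀ x t, x < |t| → K x t = 0) {t : ℝ} (ht : |t| = 1) : K 1 t = 0 := by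
  have hcont : ContinuousOn (fun y => K y t) (Icc 0 1) :=
    hK.comp (f := fun y => (y, t)) (by fun_prop) fun y hy => ⟨hy, abs_le.mp ht.le⟩
  have hzero : EqOn (fun y => K y t) 0 (Ico 0 1) := fun y hy => hKsupp y t (ht ▸ hy.2)
  exact hzero.of_subset_closure hcont continuousOn_const Ico_subset_Icc_self
    (by rw [closure_Ico zero_ne_one]) (right_mem_Icc.mpr zero_le_one)

lemma continuous_kernel_section
    (hK : ContinuousOn (fun p : ℝ × ℝ => K p.1 p.2) (Icc 0 1 ×ˢ Icc (-1) 1))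
    (hKsupp : ∀ x t, x < |t| → K x t = 0) {x : ℝ} (hx : x ∈ Icc (0 : ℝ) 1) :
    Continuous (K x) := by
  have hout : EqOn (K x) 0 {t : ℝ | 1 ≤ |t|} := by
    intro t ht
    rcases lt_or_ge x |t| with hlt | hge
    · exact hKsupp x t hlt
    · obtain rfl : x = 1 := le_antisymm hx.2 (le_trans ht hge)
      exact kernel_one_eq_zero hK hKsupp (le_antisymm hge ht)
  have hon : ContinuousOn (K x) (Icc (-1) 1 ∪ {t | 1 ≤ |t|}) :=
    (hK.comp (f := fun t => (x, t)) (by fun_prop) fun t ht => ⟨hx, ht⟩).union_of_isClosed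
      (continuousOn_const.congr hout) isClosed_Icc (isClosed_le continuous_const continuous_abs)
  have hcover : Icc (-1) 1 ∪ {t : ℝ | 1 ≤ |t|} = univ :=
    eq_univ_of_forall fun t => (le_total |t| 1).imp abs_le.mp id
  rwa [hcover, continuousOn_univ] at hon

end KernelSection

lemma lt_abs_of_notMem_Icc_neg {x t : ℝ} (ht : t ∉ Icc (-x) x) : x < |t| :=
  lt_of_not_ge fun h => ht (abs_le.mp h)

lemma integral_eq_intervalIntegral_of_eq_zero_off {E : Type*} [NormedAddCommGroup E]
    [NormedSpace ℝ E] {f : ℝ → E} {a b : ℝ} (hab : a ≤ b) (hf : ∀ t ∉ Icc a b, f t = 0) :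
    ∫ t, f t = ∫ t in a..b, f t := by
  rw [intervalIntegral.integral_of_le hab, ← integral_Icc_eq_integral_Ioc,
    setIntegral_eq_integral_of_forall_compl_eq_zero hf]

lemma integral_eq_two_mul_intervalIntegral_of_even {f : ℝ → ℂ} {x : ℝ} (hx : 0 ≤ x)
    (hf : Continuous f) (heven : ∀ t, f (-t) = f t) (hsupp : ∀ t ∉ Icc (-x) x, f t = 0) :
    ∫ t, f t = 2 * ∫ t in 0..x, f t := by
  have hneg : ∫ t in -x..0, f t = ∫ t in 0..x, f t := by
    simpa only [neg_zero, heven] using (intervalIntegral.integral_comp_neg (a := 0) (b := x) f).symm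
  rw [integral_eq_intervalIntegral_of_eq_zero_off (by linarith) hsupp,
    ← intervalIntegral.integral_add_adjacent_intervals (hf.intervalIntegrable _ 0)
      (hf.intervalIntegrable 0 _), hneg, two_mul]

lemma integral_mul_cos_add (h : ℝ → ℂ) (ρ : ℂ) (a : ℝ) :
    ∫ s, h s * Complex.cos (ρ * (a + s))
      = 2 * ∫ u, h (2 * u - a) * Complex.cos (2 * ρ * u) := by
  set φ : ℝ → ℂ := fun s => h s * Complex.cos (ρ * (a + s))
  have hφ : ∀ u : ℝ, h (2 * u - a) * Complex.cos (2 * ρ * u) = φ (2 * u - a) := by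
    intro u
    simp only [φ]
    push_cast
    ring_nf
  simp_rw [hφ]
  rw [Measure.integral_comp_mul_left (fun v => φ (v - a)), integral_sub_right_eq_self φ a,
    Complex.real_smul, abs_of_pos (by norm_num)]
  push_cast
  ring

lemma sin_mul_integral_mul_sin {f : ℝ → ℂ} (hf : Continuous f) (hfc : HasCompactSupport f)
    (hodd : ∀ t, f (-t) = -f t) (ρ : ℂ) (a : ℝ) :
    Complex.sin (ρ * a) * ∫ t, f t * Complex.sin (ρ * t)
      = -2 * ∫ u, f (2 * u - a) * Complex.cos (2 * ρ * u) := by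
  have hplus : Integrable fun t => f t * Complex.cos (ρ * (a + t)) :=
    (hf.mul (by fun_prop)).integrable_of_hasCompactSupport hfc.mul_right
  have hminus : Integrable fun t => f t * Complex.cos (ρ * (a - t)) :=
    (hf.mul (by fun_prop)).integrable_of_hasCompactSupport hfc.mul_right
  have hreflect : ∫ t, f t * Complex.cos (ρ * (a - t))
      = -∫ t, f t * Complex.cos (ρ * (a + t)) := by
    rw [← integral_neg_eq_self, ← integral_neg]
    congr 1 with t
    rw [hodd]
    push_cast
    ring_nf
  calc Complex.sin (ρ * a) * ∫ t, f t * Complex.sin (ρ * t)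
      = ∫ t, (f t * Complex.cos (ρ * (a - t)) - f t * Complex.cos (ρ * (a + t))) / 2 := by
        rw [← integral_const_mul]
        congr 1 with t
        rw [mul_sub, mul_add, Complex.cos_sub, Complex.cos_add]
        ring
    _ = -∫ t, f t * Complex.cos (ρ * (a + t)) := by
        rw [integral_div, integral_sub hminus hplus, hreflect]
        ring
    _ = -2 * ∫ u, f (2 * u - a) * Complex.cos (2 * ρ * u) := by
        rw [integral_mul_cos_add]
        ring

section Convolution

variable {f g : ℝ → ℂ}

lemma convolution_neg_of_odd (hf : ∀ t, f (-t) = -f t) (hg : ∀ t, g (-t) = -g t) (v : ℝ) :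
    (f ⋆[mul ℂ ℂ] g) (-v) = (f ⋆[mul ℂ ℂ] g) v := by
  simp only [convolution_mul]
  rw [← integral_neg_eq_self]
  congr 1 with t
  rw [hf, show -v - -t = -(v - t) by ring, hg, neg_mul_neg]

lemma convolution_eq_intervalIntegral {x u : ℝ} (hu : u ≤ 2 * x)
    (hfs : ∀ t, x < |t| → f t = 0) (hgs : ∀ t, x < |t| → g t = 0) :
    (f ⋆[mul ℂ ℂ] g) u = ∫ t in (u - x)..x, f t * g (u - t) := by
  rw [convolution_mul]
  refine integral_eq_intervalIntegral_of_eq_zero_off (by linarith) fun t ht => ?_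
  rcases not_and_or.mp ht with hlt | hgt
  · rw [hgs _ (lt_of_lt_of_le (by linarith [not_le.mp hlt]) (le_abs_self _)), mul_zero]
  · rw [hfs _ (lt_of_lt_of_le (not_le.mp hgt) (le_abs_self _)), zero_mul]

lemma convolution_eq_zero {x u : ℝ} (hu : 2 * x < |u|)
    (hfs : ∀ t, x < |t| → f t = 0) (hgs : ∀ t, x < |t| → g t = 0) :
    (f ⋆[mul ℂ ℂ] g) u = 0 := by
  have hzero : ∀ t, f t * g (u - t) = 0 := by
    intro t
    rcases lt_or_ge x |t| with ht | ht
    · rw [hfs t ht, zero_mul]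
    · have : x < |u - t| := by linarith [abs_sub_abs_le_abs_sub u t]
      rw [hgs _ this, mul_zero]
  simp only [convolution_mul, hzero, integral_zero]

lemma hasCompactSupport_uncurry_mul_comp_two_mul_sub (hfc : HasCompactSupport f)
    (hgc : HasCompactSupport g) (c : ℝ → ℂ) :
    HasCompactSupport (Function.uncurry fun t u => f t * (g (2 * u - t) * c u)) := by
  refine HasCompactSupport.intro ((hfc.isCompact.prod hgc.isCompact).image
    (f := fun p : ℝ × ℝ => (p.1, (p.1 + p.2) / 2)) (by fun_prop)) ?_
  rintro ⟨t, u⟩ hp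
  by_contra hne
  simp only [Function.uncurry_apply_pair, mul_ne_zero_iff] at hne
  refine hp ⟨(t, 2 * u - t), ⟨subset_tsupport _ hne.1, subset_tsupport _ hne.2.1⟩, ?_⟩
  simp only [Prod.mk.injEq, true_and]
  ring

lemma integral_mul_sin_mul_integral_mul_sin (hf : Continuous f) (hfc : HasCompactSupport f)
    (hg : Continuous g) (hgc : HasCompactSupport g) (hgodd : ∀ t, g (-t) = -g t) (ρ : ℂ) :
    (∫ t, f t * Complex.sin (ρ * t)) * ∫ t, g t * Complex.sin (ρ * t)
      = -2 * ∫ u, (f ⋆[mul ℂ ℂ] g) (2 * u) * Complex.cos (2 * ρ * u) := by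
  set F : ℝ → ℝ → ℂ := fun t u => f t * (g (2 * u - t) * Complex.cos (2 * ρ * u))
  have hFc : Continuous (Function.uncurry F) := by
    simp only [F]
    fun_prop
  calc (∫ t, f t * Complex.sin (ρ * t)) * ∫ t, g t * Complex.sin (ρ * t)
      = ∫ t, f t * (Complex.sin (ρ * t) * ∫ s, g s * Complex.sin (ρ * s)) := by
        rw [← integral_mul_const]
        congr 1 with t
        ring
    _ = ∫ t, -2 * ∫ u, F t u := by
        congr 1 with t
        rw [sin_mul_integral_mul_sin hg hgc hgodd, integral_const_mul]
        ring
    _ = -2 * ∫ u, ∫ t, F t u := by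
        rw [integral_const_mul, integral_integral_swap_of_hasCompactSupport hFc
          (hasCompactSupport_uncurry_mul_comp_two_mul_sub hfc hgc _)]
    _ = -2 * ∫ u, (f ⋆[mul ℂ ℂ] g) (2 * u) * Complex.cos (2 * ρ * u) := by
        congr 2 with u
        rw [convolution_mul, ← integral_mul_const]
        congr 1 with t
        simp only [F]
        ring

end Convolution

section OddKernel

variable {f g : ℝ → ℂ} {x : ℝ}

lemma hasCompactSupport_of_eq_zero_of_lt_abs (hfs : ∀ t, x < |t| → f t = 0) :
    HasCompactSupport f :=
  HasCompactSupport.intro isCompact_Icc fun t ht => hfs t (lt_abs_of_notMem_Icc_neg ht)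

lemma integral_mul_sin_eq_two_mul_intervalIntegral (hx : 0 ≤ x) (hf : Continuous f)
    (hfodd : ∀ t, f (-t) = -f t) (hfs : ∀ t, x < |t| → f t = 0) (ρ : ℂ) :
    ∫ t, f t * Complex.sin (ρ * t) = 2 * ∫ t in 0..x, f t * Complex.sin (ρ * t) := by
  refine integral_eq_two_mul_intervalIntegral_of_even hx (by fun_prop) (fun t => ?_)
    fun t ht => ?_
  · rw [hfodd, Complex.ofReal_neg, mul_neg, Complex.sin_neg, neg_mul_neg]
  · rw [hfs t (lt_abs_of_notMem_Icc_neg ht), zero_mul]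

lemma sin_mul_intervalIntegral_mul_sin (hx : 0 ≤ x) (hf : Continuous f)
    (hfodd : ∀ t, f (-t) = -f t) (hfs : ∀ t, x < |t| → f t = 0) (ρ : ℂ) :
    -(2 * Complex.sin (ρ * x) * ∫ t in 0..x, f t * Complex.sin (ρ * t))
      = 2 * ∫ u in 0..x, f (2 * u - x) * Complex.cos (2 * ρ * u) := by
  have h := sin_mul_integral_mul_sin hf (hasCompactSupport_of_eq_zero_of_lt_abs hfs) hfodd ρ x
  rw [integral_mul_sin_eq_two_mul_intervalIntegral hx hf hfodd hfs,
    integral_eq_intervalIntegral_of_eq_zero_off hx fun u hu => ?_] at h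
  · linear_combination -h
  · have : x < |2 * u - x| := by
      rw [lt_abs]
      rcases not_and_or.mp hu with hneg | hbig
      · right; linarith [not_le.mp hneg]
      · left; linarith [not_le.mp hbig]
    rw [hfs _ this, zero_mul]

lemma intervalIntegral_mul_sin_mul_intervalIntegral_mul_sin (hx : 0 ≤ x) (hf : Continuous f)
    (hg : Continuous g) (hfodd : ∀ t, f (-t) = -f t) (hgodd : ∀ t, g (-t) = -g t)
    (hfs : ∀ t, x < |t| → f t = 0) (hgs : ∀ t, x < |t| → g t = 0) (ρ : ℂ) :
    -(2 * (∫ t in 0..x, f t * Complex.sin (ρ * t)) * ∫ t in 0..x, g t * Complex.sin (ρ * t))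
      = 2 * ∫ u in 0..x, (f ⋆[mul ℂ ℂ] g) (2 * u) * Complex.cos (2 * ρ * u) := by
  have hfc := hasCompactSupport_of_eq_zero_of_lt_abs hfs
  have hconv : Continuous (f ⋆[mul ℂ ℂ] g) :=
    hfc.continuous_convolution_left _ hf hg.locallyIntegrable
  have h := integral_mul_sin_mul_integral_mul_sin hf hfc hg
    (hasCompactSupport_of_eq_zero_of_lt_abs hgs) hgodd ρ
  rw [integral_mul_sin_eq_two_mul_intervalIntegral hx hf hfodd hfs,
    integral_mul_sin_eq_two_mul_intervalIntegral hx hg hgodd hgs,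
    integral_eq_two_mul_intervalIntegral_of_even hx (by fun_prop) (fun u => ?_)
      fun u hu => ?_] at h
  · linear_combination -h / 2
  · rw [mul_neg, convolution_neg_of_odd hfodd hgodd, Complex.ofReal_neg, mul_neg, Complex.cos_neg]
  · have : 2 * x < |2 * u| := by
      rw [abs_mul, abs_two]
      linarith [lt_abs_of_notMem_Icc_neg hu]
    rw [convolution_eq_zero this hfs hgs, zero_mul]

theorem one_sub_two_mul_sin_add_mul_sin_add (hx : 0 ≤ x) (hf : Continuous f)
    (hg : Continuous g) (hfodd : ∀ t, f (-t) = -f t) (hgodd : ∀ t, g (-t) = -g t)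
    (hfs : ∀ t, x < |t| → f t = 0) (hgs : ∀ t, x < |t| → g t = 0) (ρ : ℂ) :
    1 - 2 * (Complex.sin (ρ * x) + ∫ t in 0..x, f t * Complex.sin (ρ * t))
        * (Complex.sin (ρ * x) + ∫ t in 0..x, g t * Complex.sin (ρ * t))
      = Complex.cos (2 * ρ * x) + ∫ u in 0..x, 2 * (f (2 * u - x) + g (2 * u - x)
          + ∫ τ in (2 * u - x)..x, f τ * g (2 * u - τ)) * Complex.cos (2 * ρ * u) := by
  have hconv : Continuous (f ⋆[mul ℂ ℂ] g) :=
    (hasCompactSupport_of_eq_zero_of_lt_abs hfs).continuous_convolution_left _ hf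
      hg.locallyIntegrable
  have hinner : ∫ u in 0..x, 2 * (f (2 * u - x) + g (2 * u - x)
        + ∫ τ in (2 * u - x)..x, f τ * g (2 * u - τ)) * Complex.cos (2 * ρ * u)
      = 2 * (∫ u in 0..x, f (2 * u - x) * Complex.cos (2 * ρ * u))
        + 2 * (∫ u in 0..x, g (2 * u - x) * Complex.cos (2 * ρ * u))
        + 2 * ∫ u in 0..x, (f ⋆[mul ℂ ℂ] g) (2 * u) * Complex.cos (2 * ρ * u) := by
    rw [intervalIntegral.integral_congr (g := fun u => 2 * (f (2 * u - x) * Complex.cos (2 * ρ * u))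
        + 2 * (g (2 * u - x) * Complex.cos (2 * ρ * u))
        + 2 * ((f ⋆[mul ℂ ℂ] g) (2 * u) * Complex.cos (2 * ρ * u))) fun u hu => ?_,
      intervalIntegral.integral_add, intervalIntegral.integral_add,
      intervalIntegral.integral_const_mul, intervalIntegral.integral_const_mul,
      intervalIntegral.integral_const_mul]
    all_goals try exact Continuous.intervalIntegrable (by fun_prop) _ _
    rw [uIcc_of_le hx] at hu
    dsimp only
    rw [convolution_eq_intervalIntegral (by linarith [hu.2]) hfs hgs]
    ring
  have hcos : Complex.cos (2 * ρ * x) = 1 - 2 * Complex.sin (ρ * x) ^ 2 := by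
    rw [mul_assoc, Complex.cos_two_mul, Complex.cos_sq']
    ring
  rw [hinner, hcos]
  linear_combination sin_mul_intervalIntegral_mul_sin hx hf hfodd hfs ρ
    + sin_mul_intervalIntegral_mul_sin hx hg hgodd hgs ρ
    + intervalIntegral_mul_sin_mul_intervalIntegral_mul_sin hx hf hg hfodd hgodd hfs hgs ρ

end OddKernel

open Real MeasureTheory intervalIntegral

theorem stmt_15 (K Kt : ℝ → ℝ → ℂ)
    (hKcont : ContinuousOn (fun p : ℝ × ℝ => K p.1 p.2) (Set.Icc 0 1 ×ˢ Set.Icc (-1) 1))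
    (hKtcont : ContinuousOn (fun p : ℝ × ℝ => Kt p.1 p.2) (Set.Icc 0 1 ×ˢ Set.Icc (-1) 1))
    (hKodd : ∀ x t, K x (-t) = -K x t) (hKtodd : ∀ x t, Kt x (-t) = -Kt x t)
    (hKsupp : ∀ x t, x < |t| → K x t = 0) (hKtsupp : ∀ x t, x < |t| → Kt x t = 0)
    (S St : ℝ → ℂ → ℂ)
    (hS : ∀ x (ρ : ℂ), S x ρ = Complex.sin (ρ * x) / ρ
      + ∫ t in (0:ℝ)..x, K x t * Complex.sin (ρ * t) / ρ)
    (hSt : ∀ x (ρ : ℂ), St x ρ = Complex.sin (ρ * x) / ρ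
      + ∫ t in (0:ℝ)..x, Kt x t * Complex.sin (ρ * t) / ρ)
    (Q : ℝ → ℝ → ℂ)
    (hQ : ∀ x t, 0 ≤ t → t ≤ x → x ≤ 1 →
      Q x t = 2 * (K x (2 * t - x) + Kt x (2 * t - x)
        + ∫ τ in (2 * t - x)..x, K x τ * Kt x (2 * t - τ)))
    (x : ℝ) (hx : x ∈ Set.Icc (0:ℝ) 1) (ρ : ℂ) (hρ : ρ ≠ 0) :
    1 - 2 * ρ ^ 2 * S x ρ * St x ρ
      = Complex.cos (2 * ρ * x) + ∫ t in (0:ℝ)..x, Q x t * Complex.cos (2 * ρ * t) := by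
  have hQint : ∫ t in (0:ℝ)..x, Q x t * Complex.cos (2 * ρ * t)
      = ∫ t in (0:ℝ)..x, 2 * (K x (2 * t - x) + Kt x (2 * t - x)
          + ∫ τ in (2 * t - x)..x, K x τ * Kt x (2 * t - τ)) * Complex.cos (2 * ρ * t) :=
    integral_congr fun t ht => by
      rw [Set.uIcc_of_le hx.1] at ht
      rw [hQ x t ht.1 ht.2 hx.2]
  rw [hS, hSt, intervalIntegral.integral_div, intervalIntegral.integral_div, hQint,
    ← one_sub_two_mul_sin_add_mul_sin_add hx.1 (continuous_kernel_section hKcont hKsupp hx)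
      (continuous_kernel_section hKtcont hKtsupp hx) (hKodd x) (hKtodd x) (hKsupp x)
      (hKtsupp x) ρ]
  field_simp
end
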